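/- Let M be a von Neumann algebra on a complex Hilbert space H, let G be a topological group, and let β : G → (M → M) be a group homomorphism into *-algebra automorphisms of M such that for each x ∈ M the orbit map g ↦ β_g(x) is WOT-continuous. Let P : M → M be a completely contractive linear idempotent (with M regarded as a C*-algebra) satisfying β_g ∘ P = P ∘ β_g for every g ∈ G. Set X := P(M) and {a,b,c} := P(a b* c) for a, b, c ∈ X. Then for every g ∈ G: β_g(X) = X, and β_g({a,b,c}) = {β_g(a), β_g(b), β_g(c)} for all a,b,c ∈ X. Consequently α_g := β_g|_X defines an action of G on the TRO (X, {·,·,·}) by surjective linear isometries preserving the ternary product, and for each x ∈ X the orbit map g ↦ α_g(x) is WOT-continuous. -/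

import Mathlib

/-! A `*`-automorphism `β g` of `M` commuting with `P` permutes the fixed points of `P`, which are
exactly `X`, and intertwines the ternary products `P (a b* c)` because `a b* c ∈ M`. It is
isometric because a `*`-isomorphism of C*-algebras preserves the spectral radius of `x* x`, hence
the norm; `M` is a C*-algebra since a double commutant is norm closed. -/

open Filter Topology

noncomputable section

variable {H : Type*} [NormedAddCommGroup H] [InnerProductSpace ℂ H] [CompleteSpace H]

/-- A C*-norm on a complex `*`-algebra: a submultiplicative norm satisfying the C*-identity.
On the matrix algebra `Mₙ(B(H))` such a norm is unique and coincides with the canonical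
C*-norm, so quantifying over all such norms faithfully expresses the matrix norm condition. -/
def IsCStarNorm {B : Type*} [NonUnitalRing B] [StarRing B] [Module ℂ B] (N : B → ℝ) : Prop :=
  (∀ x, 0 ≤ N x) ∧ (∀ x, N x = 0 ↔ x = 0) ∧ (∀ x y, N (x + y) ≤ N x + N y) ∧
    (∀ (c : ℂ) (x), N (c • x) = ‖c‖ * N x) ∧ (∀ x y, N (x * y) ≤ N x * N y) ∧
    (∀ x, N (star x * x) = N x * N x)

/-- A map `P` is completely contractive on a subset `S` of `B(H)` if all of its entrywise
amplifications to matrices with entries in `S` are contractive for the matrix C*-norm. -/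
def CompletelyContractiveOn (S : Set (H →L[ℂ] H)) (P : (H →L[ℂ] H) → (H →L[ℂ] H)) : Prop :=
  ∀ (n : ℕ) (N : Matrix (Fin n) (Fin n) (H →L[ℂ] H) → ℝ), IsCStarNorm N →
    ∀ T : Matrix (Fin n) (Fin n) (H →L[ℂ] H), (∀ i j, T i j ∈ S) →
      N (Matrix.of fun i j => P (T i j)) ≤ N T

theorem Set.image_eq_sep_fixed_of_idempotent {α : Type*} {s : Set α} {P : α → α}
    (hP : Set.MapsTo P s s) (hidem : ∀ x ∈ s, P (P x) = P x) :
    P '' s = {y ∈ s | P y = y} := by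
  ext y
  constructor
  · rintro ⟨x, hx, rfl⟩
    exact ⟨hP hx, hidem x hx⟩
  · rintro ⟨hy, hPy⟩
    exact ⟨y, hy, hPy⟩

theorem Set.BijOn.image_sep_fixed_eq_of_commute {α : Type*} {s : Set α} {f P : α → α}
    (hf : Set.BijOn f s s) (hP : Set.MapsTo P s s) (hcomm : ∀ x ∈ s, f (P x) = P (f x)) :
    f '' {y ∈ s | P y = y} = {y ∈ s | P y = y} := by
  refine Set.BijOn.image_eq ⟨?_, hf.injOn.mono fun _ h => h.1, ?_⟩
  · rintro x ⟨hx, hPx⟩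
    exact ⟨hf.mapsTo hx, by rw [← hcomm x hx, hPx]⟩
  · rintro y ⟨hy, hPy⟩
    obtain ⟨x, hx, rfl⟩ := hf.surjOn hy
    have hPx : P x = x := hf.injOn (hP hx) hx (by rw [hcomm x hx, hPy])
    exact ⟨x, ⟨hx, hPx⟩, rfl⟩

theorem map_ternary_of_commute {A S : Type*} [Mul A] [Star A] [SetLike S A] [MulMemClass S A]
    [StarMemClass S A] {s : S} {f P : A → A}
    (hmul : ∀ x ∈ s, ∀ y ∈ s, f (x * y) = f x * f y) (hstar : ∀ x ∈ s, f (star x) = star (f x))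
    (hcomm : ∀ x ∈ s, f (P x) = P (f x)) {a b c : A} (ha : a ∈ s) (hb : b ∈ s) (hc : c ∈ s) :
    f (P (a * star b * c)) = P (f a * star (f b) * f c) := by
  have hab : a * star b ∈ s := mul_mem ha (star_mem hb)
  rw [hcomm _ (mul_mem hab hc), hmul _ hab c hc, hmul a ha _ (star_mem hb), hstar b hb]

namespace StarSubalgebra

def starAlgEquivOfBijOn {R A : Type*} [CommSemiring R] [StarRing R] [Semiring A] [StarRing A]
    [Algebra R A] [StarModule R A] (S : StarSubalgebra R A) (f : A → A) (hf : Set.BijOn f S S)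
    (hadd : ∀ x ∈ S, ∀ y ∈ S, f (x + y) = f x + f y)
    (hsmul : ∀ (c : R), ∀ x ∈ S, f (c • x) = c • f x)
    (hmul : ∀ x ∈ S, ∀ y ∈ S, f (x * y) = f x * f y)
    (hstar : ∀ x ∈ S, f (star x) = star (f x)) : S ≃⋆ₐ[R] S where
  toEquiv := hf.equiv f
  map_mul' x y := Subtype.ext (hmul x x.2 y y.2)
  map_add' x y := Subtype.ext (hadd x x.2 y y.2)
  map_star' x := Subtype.ext (hstar x x.2)
  map_smul' c x := Subtype.ext (hsmul c x x.2)

theorem norm_map_of_bijOn {A : Type*} [CStarAlgebra A] (S : StarSubalgebra ℂ A)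
    [IsClosed (S : Set A)] (f : A → A) (hf : Set.BijOn f S S)
    (hadd : ∀ x ∈ S, ∀ y ∈ S, f (x + y) = f x + f y)
    (hsmul : ∀ (c : ℂ), ∀ x ∈ S, f (c • x) = c • f x)
    (hmul : ∀ x ∈ S, ∀ y ∈ S, f (x * y) = f x * f y)
    (hstar : ∀ x ∈ S, f (star x) = star (f x)) {x : A} (hx : x ∈ S) : ‖f x‖ = ‖x‖ :=
  StarAlgEquiv.norm_map (S.starAlgEquivOfBijOn f hf hadd hsmul hmul hstar) ⟨x, hx⟩

end StarSubalgebra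

instance VonNeumannAlgebra.isClosed (M : VonNeumannAlgebra H) :
    IsClosed (M.toStarSubalgebra : Set (H →L[ℂ] H)) :=
  M.centralizer_centralizer ▸ Set.isClosed_centralizer _

theorem action_restricts_to_fixed_TRO_general
    {G : Type*} [Group G] [TopologicalSpace G]
    (M : VonNeumannAlgebra H)
    (β : G → (H →L[ℂ] H) → (H →L[ℂ] H))
    (hbij : ∀ g : G, Set.BijOn (β g) (M : Set (H →L[ℂ] H)) (M : Set (H →L[ℂ] H)))
    (hadd : ∀ g : G, ∀ x ∈ M, ∀ y ∈ M, β g (x + y) = β g x + β g y)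
    (hsmul : ∀ g : G, ∀ (c : ℂ), ∀ x ∈ M, β g (c • x) = c • β g x)
    (hmul : ∀ g : G, ∀ x ∈ M, ∀ y ∈ M, β g (x * y) = β g x * β g y)
    (hstar : ∀ g : G, ∀ x ∈ M, β g (star x) = star (β g x))
    (hhom : ∀ g h : G, ∀ x ∈ M, β (g * h) x = β g (β h x))
    (hone : ∀ x ∈ M, β (1 : G) x = x)
    (hcont : ∀ x ∈ M, Continuous fun g : G => (ContinuousLinearMapWOT.ofCLM (β g x) : H →WOT[ℂ] H))
    (P : (H →L[ℂ] H) → (H →L[ℂ] H))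
    (hPmem : ∀ x ∈ M, P x ∈ M)
    (hPidem : ∀ x ∈ M, P (P x) = P x)
    (hcomm : ∀ g : G, ∀ x ∈ M, β g (P x) = P (β g x))
    (X : Set (H →L[ℂ] H)) (hX : X = {y | ∃ x ∈ M, P x = y}) :
    -- each β g maps X onto X
    (∀ g : G, β g '' X = X) ∧
    -- β g preserves the ternary product {a,b,c} = P (a b* c)
    (∀ g : G, ∀ a ∈ X, ∀ b ∈ X, ∀ c ∈ X,
      β g (P (a * star b * c)) = P (β g a * star (β g b) * β g c)) ∧
    -- each β g is isometric on X
    (∀ g : G, ∀ x ∈ X, ‖β g x‖ = ‖x‖) ∧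
    -- the restricted maps form an action of G on X
    (∀ g h : G, ∀ x ∈ X, β (g * h) x = β g (β h x)) ∧
    (∀ x ∈ X, β (1 : G) x = x) ∧
    -- the orbit maps are WOT-continuous on X
    (∀ x ∈ X, Continuous fun g : G => (ContinuousLinearMapWOT.ofCLM (β g x) : H →WOT[ℂ] H)) := by
  have hXfix : X = {y ∈ (M : Set (H →L[ℂ] H)) | P y = y} :=
    hX.trans (Set.image_eq_sep_fixed_of_idempotent hPmem hPidem)
  have hXM : X ⊆ M := hXfix ▸ fun _ hy => hy.1
  refine ⟨fun g => hXfix ▸ (hbij g).image_sep_fixed_eq_of_commute hPmem (hcomm g),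
    fun g a ha b hb c hc =>
      map_ternary_of_commute (hmul g) (hstar g) (hcomm g) (hXM ha) (hXM hb) (hXM hc),
    fun g x hx => M.toStarSubalgebra.norm_map_of_bijOn (β g) (hbij g) (hadd g) (hsmul g) (hmul g)
      (hstar g) (hXM hx),
    fun g h x hx => hhom g h x (hXM hx), fun x hx => hone x (hXM hx),
    fun x hx => hcont x (hXM hx)⟩

/-- A WOT-continuous action of a group on a von Neumann algebra commuting with a completely
contractive idempotent `P` induces an action on the TRO `X = P(M)` with ternary product
`{a,b,c} = P(a b* c)`, by surjective isometries preserving the ternary product,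
with WOT-continuous orbit maps. -/
theorem action_restricts_to_fixed_TRO
    {G : Type*} [Group G] [TopologicalSpace G] [IsTopologicalGroup G]
    (M : VonNeumannAlgebra H)
    (β : G → (H →L[ℂ] H) → (H →L[ℂ] H))
    (hbij : ∀ g : G, Set.BijOn (β g) (M : Set (H →L[ℂ] H)) (M : Set (H →L[ℂ] H)))
    (hadd : ∀ g : G, ∀ x ∈ M, ∀ y ∈ M, β g (x + y) = β g x + β g y)
    (hsmul : ∀ g : G, ∀ (c : ℂ), ∀ x ∈ M, β g (c • x) = c • β g x)
    (hmul : ∀ g : G, ∀ x ∈ M, ∀ y ∈ M, β g (x * y) = β g x * β g y)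
    (hstar : ∀ g : G, ∀ x ∈ M, β g (star x) = star (β g x))
    (hhom : ∀ g h : G, ∀ x ∈ M, β (g * h) x = β g (β h x))
    (hone : ∀ x ∈ M, β (1 : G) x = x)
    (hcont : ∀ x ∈ M, Continuous fun g : G => (ContinuousLinearMapWOT.ofCLM (β g x) : H →WOT[ℂ] H))
    (P : (H →L[ℂ] H) → (H →L[ℂ] H))
    (hPmem : ∀ x ∈ M, P x ∈ M)
    (hPadd : ∀ x ∈ M, ∀ y ∈ M, P (x + y) = P x + P y)
    (hPsmul : ∀ (c : ℂ), ∀ x ∈ M, P (c • x) = c • P x)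
    (hPidem : ∀ x ∈ M, P (P x) = P x)
    (hPcc : CompletelyContractiveOn (M : Set (H →L[ℂ] H)) P)
    (hcomm : ∀ g : G, ∀ x ∈ M, β g (P x) = P (β g x))
    (X : Set (H →L[ℂ] H)) (hX : X = {y | ∃ x ∈ M, P x = y}) :
    -- each β g maps X onto X
    (∀ g : G, β g '' X = X) ∧
    -- β g preserves the ternary product {a,b,c} = P (a b* c)
    (∀ g : G, ∀ a ∈ X, ∀ b ∈ X, ∀ c ∈ X,
      β g (P (a * star b * c)) = P (β g a * star (β g b) * β g c)) ∧
    -- each β g is isometric on X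
    (∀ g : G, ∀ x ∈ X, ‖β g x‖ = ‖x‖) ∧
    -- the restricted maps form an action of G on X
    (∀ g h : G, ∀ x ∈ X, β (g * h) x = β g (β h x)) ∧
    (∀ x ∈ X, β (1 : G) x = x) ∧
    -- the orbit maps are WOT-continuous on X
    (∀ x ∈ X, Continuous fun g : G => (ContinuousLinearMapWOT.ofCLM (β g x) : H →WOT[ℂ] H)) :=
  action_restricts_to_fixed_TRO_general M β hbij hadd hsmul hmul hstar hhom hone hcont P hPmem
    hPidem hcomm X hX

end
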